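/- arXiv:1005.5329 — 2 statements merged into one kernel-verified Lean document; each statement's English description precedes it below -/
import Mathlib

section
/- Let a ∈ ℝ with a² < 1, u₀ ≠ 0, and g₂ ∈ ℝ. Then the symbol of the linearized interface operator, p(τ,ξ) = (τ − a·u₀·i·ξ)² + u₀²(1−a²)(i·ξ)² + a·g₂·|ξ| = (τ − i a u₀ ξ)² − u₀²(1−a²)ξ² + a g₂ |ξ|, is elliptic in the sense that there exist C, R > 0 such that |p(iσ,ξ)| ≥ C(σ² + ξ²) for all real (σ,ξ) with σ² + ξ² ≥ R². Equivalently, the roots τ(ξ) of p(τ,ξ) = 0 satisfy |Re τ(ξ)| ≥ c|ξ| for |ξ| large. -/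
open Complex

/-- Ellipticity of the symbol of the linearized Kelvin-Helmholtz/Rayleigh-Taylor
interface operator: for `a² < 1`, `u₀ ≠ 0`, the symbol
`p(τ,ξ) = (τ - i a u₀ ξ)² - u₀²(1-a²)ξ² + a g₂ |ξ|` satisfies
`|p(iσ,ξ)| ≥ C (σ² + ξ²)` for `σ² + ξ² ≥ R²`. -/
theorem symbol_elliptic (a u₀ g₂ : ℝ) (ha : a ^ 2 < 1) (hu : u₀ ≠ 0)
    (p : ℂ → ℝ → ℂ)
    (hp : ∀ (τ : ℂ) (ξ : ℝ), p τ ξ =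
      (τ - Complex.I * (a : ℂ) * (u₀ : ℂ) * (ξ : ℂ)) ^ 2
        - ((u₀ ^ 2 * (1 - a ^ 2) * ξ ^ 2 : ℝ) : ℂ)
        + ((a * g₂ * |ξ| : ℝ) : ℂ)) :
    ∃ C R : ℝ, 0 < C ∧ 0 < R ∧
      ∀ (σ ξ : ℝ), R ^ 2 ≤ σ ^ 2 + ξ ^ 2 →
        C * (σ ^ 2 + ξ ^ 2) ≤ ‖p (Complex.I * (σ : ℂ)) ξ‖ := by
  have ha1 : 0 < 1 - a ^ 2 := by linarith
  have hu2 : 0 < u₀ ^ 2 := by positivity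
  set M : ℝ := |a * g₂| + 1 with hMdef
  have hM : 0 < M := by positivity
  set c : ℝ := u₀ ^ 2 * (1 - a ^ 2) / (2 * (1 + u₀ ^ 2)) with hcdef
  have hc : 0 < c := by positivity
  clear_value M
  refine ⟨c / 2, max 1 (2 * M / c), by positivity, lt_of_lt_of_le one_pos (le_max_left _ _), ?_⟩
  intro σ ξ hs
  have hval : p (Complex.I * (σ : ℂ)) ξ =
      ((-(σ - a * u₀ * ξ) ^ 2 - u₀ ^ 2 * (1 - a ^ 2) * ξ ^ 2 + a * g₂ * |ξ| : ℝ) : ℂ) := by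
    rw [hp]
    push_cast
    linear_combination ((σ : ℂ) - a * u₀ * ξ) ^ 2 * Complex.I_sq
  rw [hval, Complex.norm_real, Real.norm_eq_abs]
  set s : ℝ := σ ^ 2 + ξ ^ 2 with hsdef
  have hQ : c * s ≤ (σ - a * u₀ * ξ) ^ 2 + u₀ ^ 2 * (1 - a ^ 2) * ξ ^ 2 := by
    rw [hcdef, div_mul_eq_mul_div, div_le_iff₀ (by positivity)]
    nlinarith [sq_nonneg (σ - a * u₀ * ξ), sq_nonneg (u₀ ^ 2 * σ - a * u₀ * ξ),
      sq_nonneg (σ * u₀ - ξ), sq_nonneg (σ * u₀ + ξ), sq_nonneg (a * σ - u₀ * ξ),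
      sq_nonneg σ, sq_nonneg ξ, mul_pos hu2 ha1]
  have hRle : (2 * M / c) ^ 2 ≤ s := le_trans (pow_le_pow_left₀ (by positivity) (le_max_right 1 _) 2) hs
  have hs1 : (1 : ℝ) ≤ s := le_trans (by nlinarith [le_max_left (1:ℝ) (2 * M / c)]) hs
  have hs0 : 0 < s := by linarith
  have hMx : M * |ξ| ≤ c / 2 * s := by
    have hx2 : ξ ^ 2 ≤ s := le_add_of_nonneg_left (sq_nonneg σ)
    have hsq : (M * |ξ|) ^ 2 ≤ (c / 2 * s) ^ 2 := by
      have h1 : (2 * M / c) ^ 2 * (c / 2) ^ 2 = M ^ 2 := by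
        field_simp
      calc (M * |ξ|) ^ 2 = M ^ 2 * ξ ^ 2 := by rw [mul_pow, _root_.sq_abs]
        _ ≤ M ^ 2 * s := by nlinarith
        _ ≤ (c / 2) ^ 2 * s * s := by nlinarith [mul_le_mul_of_nonneg_right hRle (by positivity : (0:ℝ) ≤ (c/2)^2)]
        _ = (c / 2 * s) ^ 2 := by ring
    exact (pow_le_pow_iff_left₀ (by positivity) (by positivity) two_ne_zero).mp hsq
  have hag : a * g₂ * |ξ| ≤ M * |ξ| := by
    have : a * g₂ ≤ M := le_trans (le_abs_self _) (by simp [hMdef])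
    exact mul_le_mul_of_nonneg_right this (abs_nonneg ξ)
  clear_value s
  have hr : c / 2 * s ≤ -(-(σ - a * u₀ * ξ) ^ 2 - u₀ ^ 2 * (1 - a ^ 2) * ξ ^ 2 + a * g₂ * |ξ|) := by
    nlinarith [hQ, hMx, hag]
  exact le_trans hr (neg_le_abs _)
end

section
/- Prandtl-Munk vortex sheet, kinematic part: with the flat interface r(x₁,t) = (x₁, −t/2) and vorticity density ω̃(x₁) = x₁/√(1−x₁²) on (−1,1), the Biot-Savart principal value velocity at points of the sheet equals v = (0, −1/2): i.e. for every x₁ ∈ (−1,1), p.v.∫_{−1}^{1} (1/(2π)) · (x₁'−x₁)/((x₁−x₁')²) · (x₁'/√(1−x₁'²)) dx₁' interpreted via the planar Biot-Savart law yields the constant vertical velocity −1/2; equivalently, p.v.∫_{−1}^{1} (1/(x₁−x₁')) · (x₁'/√(1−x₁'²)) dx₁' = −π for all x₁ ∈ (−1,1). -/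
open MeasureTheory Metric Real

/- Auxiliary development for the Prandtl–Munk airfoil identity. -/

/-- The antiderivative of `t ↦ t/((x-t)√(1-t²))` on each side of the singularity. -/
noncomputable def pmG (x t : ℝ) : ℝ :=
  -Real.arcsin t + (x / Real.sqrt (1 - x ^ 2)) *
    (Real.log (1 - x * t + Real.sqrt (1 - x ^ 2) * Real.sqrt (1 - t ^ 2)) - Real.log (x - t))

lemma pm_sqrt_pos {t : ℝ} (h1 : -1 < t) (h2 : t < 1) : 0 < Real.sqrt (1 - t ^ 2) :=
  Real.sqrt_pos.2 (by nlinarith)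

lemma pm_N_pos {x t : ℝ} (hx1 : -1 < x) (hx2 : x < 1) (ht1 : -1 ≤ t) (ht2 : t ≤ 1) :
    0 < 1 - x * t + Real.sqrt (1 - x ^ 2) * Real.sqrt (1 - t ^ 2) := by
  have h0 : 0 ≤ Real.sqrt (1 - x ^ 2) * Real.sqrt (1 - t ^ 2) :=
    mul_nonneg (Real.sqrt_nonneg _) (Real.sqrt_nonneg _)
  have hax : |x| < 1 := abs_lt.mpr ⟨hx1, hx2⟩
  have hat : |t| ≤ 1 := abs_le.mpr ⟨ht1, ht2⟩
  have h1 : x * t ≤ |x| * |t| := by rw [← abs_mul]; exact le_abs_self _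
  have h2 : |x| * |t| ≤ |x| * 1 := mul_le_mul_of_nonneg_left hat (abs_nonneg x)
  linarith

lemma pm_alg (x t s c : ℝ) (hspos : 0 < s) (hcpos : 0 < c) (hs2 : s ^ 2 = 1 - x ^ 2)
    (hc2 : c ^ 2 = 1 - t ^ 2) (hxt : x - t ≠ 0) (hN : (1 - x * t + s * c) ≠ 0) :
    -(1 / c) + x / s * ((-x + s * (-t / c)) / (1 - x * t + s * c) - -1 / (x - t))
      = t / ((x - t) * c) := by
  have hc0 : c ≠ 0 := hcpos.ne'
  have hs0 : s ≠ 0 := hspos.ne'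
  have hN' : 1 - x * t + c * s ≠ 0 := by rw [mul_comm c s]; exact hN
  field_simp
  linear_combination (-x * c) * hs2 + (x * s) * hc2

lemma pm_hasDerivAt_G {x t : ℝ} (hx1 : -1 < x) (hx2 : x < 1) (ht : t ∈ Set.Ioo (-1 : ℝ) 1)
    (hne : t ≠ x) :
    HasDerivAt (pmG x) (t / ((x - t) * Real.sqrt (1 - t ^ 2))) t := by
  obtain ⟨ht1, ht2⟩ := ht
  set s := Real.sqrt (1 - x ^ 2) with hs
  set c := Real.sqrt (1 - t ^ 2) with hc
  have hspos : 0 < s := pm_sqrt_pos hx1 hx2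
  have hcpos : 0 < c := pm_sqrt_pos ht1 ht2
  have hs2 : s ^ 2 = 1 - x ^ 2 := Real.sq_sqrt (by nlinarith)
  have hc2 : c ^ 2 = 1 - t ^ 2 := Real.sq_sqrt (by nlinarith)
  have hNpos : 0 < 1 - x * t + s * c := pm_N_pos hx1 hx2 ht1.le ht2.le
  have hxt : x - t ≠ 0 := sub_ne_zero.2 (Ne.symm hne)
  -- derivative of arcsin
  have h1 : HasDerivAt Real.arcsin (1 / c) t := by
    simpa [hc] using Real.hasDerivAt_arcsin ht1.ne' ht2.ne
  -- derivative of √(1 - t²)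
  have hcder : HasDerivAt (fun u : ℝ => Real.sqrt (1 - u ^ 2)) (-t / c) t := by
    have hinner : HasDerivAt (fun u : ℝ => 1 - u ^ 2) (-(2 * t)) t := by
      simpa using (hasDerivAt_pow 2 t).const_sub 1
    have := (Real.hasDerivAt_sqrt (by nlinarith : 1 - t ^ 2 ≠ 0)).comp t hinner
    have h' : (1 / (2 * Real.sqrt (1 - t ^ 2)) * -(2 * t)) = -t / c := by
      rw [← hc, one_div, ← div_eq_inv_mul, neg_div, neg_div, mul_div_mul_left _ _ two_ne_zero]
    rw [h'] at this
    exact this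
  -- derivative of N
  have hNder : HasDerivAt (fun u : ℝ => 1 - x * u + s * Real.sqrt (1 - u ^ 2))
      (-x + s * (-t / c)) t := by
    have hlin : HasDerivAt (fun u : ℝ => 1 - x * u) (-x) t := by
      simpa using ((hasDerivAt_id t).const_mul x).const_sub 1
    exact hlin.add (hcder.const_mul s)
  have hlogN : HasDerivAt (fun u : ℝ => Real.log (1 - x * u + s * Real.sqrt (1 - u ^ 2)))
      ((-x + s * (-t / c)) / (1 - x * t + s * c)) t := by
    have := hNder.log hNpos.ne'
    simpa [hc] using this
  have hlogx : HasDerivAt (fun u : ℝ => Real.log (x - u)) ((-1) / (x - t)) t := by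
    have h := ((hasDerivAt_id t).const_sub x).log hxt
    simpa using h
  have htotal := (h1.neg).add ((hlogN.sub hlogx).const_mul (x / s))
  have heq : (fun u : ℝ => -Real.arcsin u +
      (x / s) * (Real.log (1 - x * u + s * Real.sqrt (1 - u ^ 2)) - Real.log (x - u))) = pmG x := by
    funext u; simp [pmG, hs]
  rw [← heq]
  refine htotal.congr_deriv (Eq.symm ?_)
  have hN : (1 - x * t + s * c) ≠ 0 := hNpos.ne'
  exact (pm_alg x t s c hspos hcpos hs2 hc2 hxt hN).symm

lemma pm_integrable_one_div_sqrt :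
    IntegrableOn (fun t : ℝ => 1 / Real.sqrt (1 - t ^ 2)) (Set.Ioo (-1 : ℝ) 1) := by
  have hbase : IntervalIntegrable (fun u : ℝ => u ^ (-(1/2) : ℝ)) volume 0 1 :=
    intervalIntegral.intervalIntegrable_rpow' (by norm_num)
  have hL : IntegrableOn (fun t : ℝ => 1 / Real.sqrt (1 - t ^ 2)) (Set.Ioc (-1 : ℝ) 0) := by
    have h2 : IntervalIntegrable (fun t : ℝ => (t + 1) ^ (-(1/2) : ℝ)) volume (-1) 0 := by
      simpa using hbase.comp_add_right 1
    have h2' : IntegrableOn (fun t : ℝ => (t + 1) ^ (-(1/2) : ℝ)) (Set.Ioc (-1 : ℝ) 0) := by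
      rwa [intervalIntegrable_iff_integrableOn_Ioc_of_le (by norm_num)] at h2
    refine MeasureTheory.Integrable.mono h2' ?_ ?_
    · exact (measurable_const.div
        (Real.continuous_sqrt.comp (continuous_const.sub (continuous_pow 2))).measurable).aestronglyMeasurable
    filter_upwards [ae_restrict_mem measurableSet_Ioc] with t ht
    obtain ⟨ht1, ht2⟩ := ht
    have h1t : 0 < t + 1 := by linarith
    have hsq : Real.sqrt (t + 1) ≤ Real.sqrt (1 - t ^ 2) := by
      apply Real.sqrt_le_sqrt; nlinarith
    have hpos : 0 < Real.sqrt (t + 1) := Real.sqrt_pos.2 h1t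
    have hrw : (t + 1) ^ (-(1/2) : ℝ) = 1 / Real.sqrt (t + 1) := by
      rw [Real.rpow_neg h1t.le, Real.sqrt_eq_rpow]; norm_num
    rw [Real.norm_eq_abs, Real.norm_eq_abs, hrw, abs_of_nonneg (by positivity),
      abs_of_nonneg (by positivity)]
    exact one_div_le_one_div_of_le hpos hsq
  have hR : IntegrableOn (fun t : ℝ => 1 / Real.sqrt (1 - t ^ 2)) (Set.Ico (0 : ℝ) 1) := by
    have h2 : IntervalIntegrable (fun t : ℝ => (1 - t) ^ (-(1/2) : ℝ)) volume 0 1 := by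
      simpa using (hbase.comp_sub_left 1).symm
    have h2' : IntegrableOn (fun t : ℝ => (1 - t) ^ (-(1/2) : ℝ)) (Set.Ico (0 : ℝ) 1) := by
      rw [integrableOn_Ico_iff_integrableOn_Ioo]
      exact ((intervalIntegrable_iff_integrableOn_Ioc_of_le (by norm_num)).1 h2).mono_set
        Set.Ioo_subset_Ioc_self
    refine MeasureTheory.Integrable.mono h2' ?_ ?_
    · exact (measurable_const.div
        (Real.continuous_sqrt.comp (continuous_const.sub (continuous_pow 2))).measurable).aestronglyMeasurable
    filter_upwards [ae_restrict_mem measurableSet_Ico] with t ht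
    obtain ⟨ht1, ht2⟩ := ht
    have h1t : 0 < 1 - t := by linarith
    have hsq : Real.sqrt (1 - t) ≤ Real.sqrt (1 - t ^ 2) := by
      apply Real.sqrt_le_sqrt; nlinarith
    have hpos : 0 < Real.sqrt (1 - t) := Real.sqrt_pos.2 h1t
    have hrw : (1 - t) ^ (-(1/2) : ℝ) = 1 / Real.sqrt (1 - t) := by
      rw [Real.rpow_neg h1t.le, Real.sqrt_eq_rpow]; norm_num
    rw [Real.norm_eq_abs, Real.norm_eq_abs, hrw, abs_of_nonneg (by positivity),
      abs_of_nonneg (by positivity)]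
    exact one_div_le_one_div_of_le hpos hsq
  exact (hL.union hR).mono_set (fun t ht => by
    rcases le_or_gt t 0 with h | h
    · exact Or.inl ⟨ht.1, h⟩
    · exact Or.inr ⟨h.le, ht.2⟩)

lemma pm_integrableOn {x : ℝ} {ε : ℝ} (hε : 0 < ε) {S : Set ℝ}
    (hS : S ⊆ Set.Ioo (-1 : ℝ) 1) (hdist : ∀ t ∈ S, ε ≤ |x - t|) (hSm : MeasurableSet S) :
    IntegrableOn (fun t : ℝ => t / ((x - t) * Real.sqrt (1 - t ^ 2))) S := by
  have hg : IntegrableOn (fun t : ℝ => (1 / ε) * (1 / Real.sqrt (1 - t ^ 2))) S :=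
    ((pm_integrable_one_div_sqrt.mono_set hS).const_mul (1 / ε))
  refine MeasureTheory.Integrable.mono hg ?_ ?_
  · apply Measurable.aestronglyMeasurable
    apply Measurable.div measurable_id
    exact ((measurable_const.sub measurable_id).mul
      (Real.continuous_sqrt.comp (continuous_const.sub (continuous_pow 2))).measurable)
  · filter_upwards [ae_restrict_mem hSm] with t ht
    have htI := hS ht
    have hc : 0 < Real.sqrt (1 - t ^ 2) := pm_sqrt_pos htI.1 htI.2
    have hd : ε ≤ |x - t| := hdist t ht
    have htabs : |t| ≤ 1 := abs_le.mpr ⟨htI.1.le, htI.2.le⟩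
    rw [Real.norm_eq_abs, Real.norm_eq_abs, abs_div, abs_mul, abs_of_nonneg hc.le]
    have h1 : |t| / (|x - t| * Real.sqrt (1 - t ^ 2)) ≤ 1 / (ε * Real.sqrt (1 - t ^ 2)) := by
      apply div_le_div₀ zero_le_one htabs (by positivity)
      exact mul_le_mul_of_nonneg_right hd hc.le
    calc |t| / (|x - t| * Real.sqrt (1 - t ^ 2)) ≤ 1 / (ε * Real.sqrt (1 - t ^ 2)) := h1
      _ = |1 / ε * (1 / Real.sqrt (1 - t ^ 2))| := by
          rw [abs_of_nonneg (by positivity)]; field_simp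

lemma pm_ftc {x a b : ℝ} (hx1 : -1 < x) (hx2 : x < 1) (ha : -1 ≤ a) (hab : a ≤ b) (hb : b ≤ 1)
    (havoid : b < x ∨ x < a)
    (hint : IntegrableOn (fun t : ℝ => t / ((x - t) * Real.sqrt (1 - t ^ 2))) (Set.Ioo a b)) :
    ∫ t in Set.Ioo a b, t / ((x - t) * Real.sqrt (1 - t ^ 2)) = pmG x b - pmG x a := by
  have hxt : ∀ t ∈ Set.Icc a b, x - t ≠ 0 := by
    intro t ht
    rcases havoid with h | h
    · exact ne_of_gt (by linarith [ht.2])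
    · exact ne_of_lt (by linarith [ht.1])
  have hNcont : Continuous (fun t : ℝ =>
      1 - x * t + Real.sqrt (1 - x ^ 2) * Real.sqrt (1 - t ^ 2)) := by
    exact (continuous_const.sub (continuous_const.mul continuous_id)).add
      (continuous_const.mul (Real.continuous_sqrt.comp (continuous_const.sub (continuous_pow 2))))
  have hcont : ContinuousOn (pmG x) (Set.Icc a b) := by
    unfold pmG
    apply ContinuousOn.add
    · exact (Real.continuous_arcsin.continuousOn).neg
    · apply ContinuousOn.mul continuousOn_const
      apply ContinuousOn.sub
      · apply ContinuousOn.log hNcont.continuousOn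
        intro t ht
        exact (pm_N_pos hx1 hx2 (by linarith [ht.1]) (by linarith [ht.2])).ne'
      · apply ContinuousOn.log ((continuous_const.sub continuous_id).continuousOn)
        intro t ht
        exact hxt t ht
  have hderiv : ∀ t ∈ Set.Ioo a b,
      HasDerivWithinAt (pmG x) (t / ((x - t) * Real.sqrt (1 - t ^ 2))) (Set.Ioi t) t := by
    intro t ht
    have htI : t ∈ Set.Ioo (-1 : ℝ) 1 := ⟨by linarith [ht.1], by linarith [ht.2]⟩
    have hne : t ≠ x := by
      rcases havoid with h | h
      · exact ne_of_lt (by linarith [ht.2])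
      · exact ne_of_gt (by linarith [ht.1])
    exact (pm_hasDerivAt_G hx1 hx2 htI hne).hasDerivWithinAt
  have hii : IntervalIntegrable (fun t : ℝ => t / ((x - t) * Real.sqrt (1 - t ^ 2))) volume a b := by
    rw [intervalIntegrable_iff_integrableOn_Ioc_of_le hab, integrableOn_Ioc_iff_integrableOn_Ioo]
    exact hint
  rw [← MeasureTheory.integral_Ioc_eq_integral_Ioo,
    ← intervalIntegral.integral_of_le hab]
  exact intervalIntegral.integral_eq_sub_of_hasDeriv_right_of_le hab hcont hderiv hii

/-- Prandtl–Munk vortex sheet, kinematic part: for every `x ∈ (-1,1)` the airfoil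
(finite Hilbert transform) identity
`p.v.∫_{-1}^{1} t/((x-t)√(1-t²)) dt = -π` holds, and consequently the vertical
Biot–Savart velocity `(1/2π) p.v.∫_{-1}^{1} ω̃(t)/(x-t) dt` equals `-1/2`. -/
theorem prandtl_munk_velocity (x : ℝ) (hx : x ∈ Set.Ioo (-1 : ℝ) 1) :
    Filter.Tendsto
      (fun ε : ℝ =>
        ∫ t in Set.Ioo (-1 : ℝ) 1 \ Metric.ball x ε,
          t / ((x - t) * Real.sqrt (1 - t ^ 2)))
      (nhdsWithin 0 (Set.Ioi 0)) (nhds (-π))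
    ∧ Filter.Tendsto
      (fun ε : ℝ =>
        (1 / (2 * π)) * ∫ t in Set.Ioo (-1 : ℝ) 1 \ Metric.ball x ε,
          t / ((x - t) * Real.sqrt (1 - t ^ 2)))
      (nhdsWithin 0 (Set.Ioi 0)) (nhds (-(1 / 2))) := by
  obtain ⟨hx1, hx2⟩ := hx
  have hspos : 0 < Real.sqrt (1 - x ^ 2) := pm_sqrt_pos hx1 hx2
  set ψ : ℝ → ℝ := fun ε => (Real.arcsin (x + ε) - Real.arcsin (x - ε))
      + (x / Real.sqrt (1 - x ^ 2)) *
        (Real.log (1 - x * (x - ε) + Real.sqrt (1 - x ^ 2) * Real.sqrt (1 - (x - ε) ^ 2))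
          - Real.log (1 - x * (x + ε) + Real.sqrt (1 - x ^ 2) * Real.sqrt (1 - (x + ε) ^ 2)))
      - π with hψdef
  have hNxpos : (0 : ℝ) < 1 - x * x + Real.sqrt (1 - x ^ 2) * Real.sqrt (1 - x ^ 2) := by
    have := pm_N_pos hx1 hx2 hx1.le hx2.le
    simpa using this
  have hN1 : Continuous (fun ε : ℝ =>
      1 - x * (x - ε) + Real.sqrt (1 - x ^ 2) * Real.sqrt (1 - (x - ε) ^ 2)) := by
    apply Continuous.add
    · exact continuous_const.sub (continuous_const.mul (continuous_const.sub continuous_id))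
    · exact continuous_const.mul (Real.continuous_sqrt.comp
        (continuous_const.sub ((continuous_const.sub continuous_id).pow 2)))
  have hN2 : Continuous (fun ε : ℝ =>
      1 - x * (x + ε) + Real.sqrt (1 - x ^ 2) * Real.sqrt (1 - (x + ε) ^ 2)) := by
    apply Continuous.add
    · exact continuous_const.sub (continuous_const.mul (continuous_const.add continuous_id))
    · exact continuous_const.mul (Real.continuous_sqrt.comp
        (continuous_const.sub ((continuous_const.add continuous_id).pow 2)))
  have hψcont : ContinuousAt ψ 0 := by
    rw [hψdef]
    apply ContinuousAt.sub _ continuousAt_const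
    apply ContinuousAt.add
    · exact ((Real.continuous_arcsin.comp (continuous_const.add continuous_id)).sub
        (Real.continuous_arcsin.comp (continuous_const.sub continuous_id))).continuousAt
    · apply ContinuousAt.mul continuousAt_const
      apply ContinuousAt.sub
      · exact ContinuousAt.log hN1.continuousAt (by simpa using hNxpos.ne')
      · exact ContinuousAt.log hN2.continuousAt (by simpa using hNxpos.ne')
  have hψ0 : ψ 0 = -π := by
    rw [hψdef]
    norm_num
  have hmain : Filter.Tendsto ψ (nhdsWithin 0 (Set.Ioi 0)) (nhds (-π)) := by
    rw [← hψ0]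
    exact hψcont.continuousWithinAt.tendsto
  set ε0 := min (1 - x) (x + 1) with hε0
  have hε0pos : 0 < ε0 := lt_min (by linarith) (by linarith)
  have hEq : ∀ ε ∈ Set.Ioo (0 : ℝ) ε0,
      (∫ t in Set.Ioo (-1 : ℝ) 1 \ Metric.ball x ε,
        t / ((x - t) * Real.sqrt (1 - t ^ 2))) = ψ ε := by
    intro ε hε
    obtain ⟨hεpos, hεlt⟩ := hε
    have hε1 : ε < 1 - x := lt_of_lt_of_le hεlt (min_le_left _ _)
    have hε2 : ε < x + 1 := lt_of_lt_of_le hεlt (min_le_right _ _)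
    have hset : Set.Ioo (-1 : ℝ) 1 \ Metric.ball x ε
        = Set.Ioc (-1) (x - ε) ∪ Set.Ico (x + ε) 1 := by
      ext t
      simp only [Set.mem_diff, Set.mem_Ioo, Real.ball_eq_Ioo, Set.mem_union, Set.mem_Ioc,
        Set.mem_Ico, not_and, not_lt]
      constructor
      · rintro ⟨⟨h1, h2⟩, h3⟩
        rcases le_or_gt t (x - ε) with h | h
        · exact Or.inl ⟨h1, h⟩
        · exact Or.inr ⟨h3 h, h2⟩
      · rintro (⟨h1, h2⟩ | ⟨h1, h2⟩)
        · exact ⟨⟨h1, by linarith⟩, fun h => by linarith⟩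
        · exact ⟨⟨by linarith, h2⟩, fun _ => h1⟩
    have hintL : IntegrableOn (fun t : ℝ => t / ((x - t) * Real.sqrt (1 - t ^ 2)))
        (Set.Ioc (-1) (x - ε)) :=
      pm_integrableOn hεpos (fun t ht => ⟨ht.1, by linarith [ht.2]⟩)
        (fun t ht => by
          rw [abs_of_pos (by linarith [ht.2] : (0 : ℝ) < x - t)]; linarith [ht.2])
        measurableSet_Ioc
    have hintR : IntegrableOn (fun t : ℝ => t / ((x - t) * Real.sqrt (1 - t ^ 2)))
        (Set.Ico (x + ε) 1) :=
      pm_integrableOn hεpos (fun t ht => ⟨by linarith [ht.1], ht.2⟩)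
        (fun t ht => by
          rw [abs_of_neg (by linarith [ht.1] : x - t < 0)]; linarith [ht.1])
        measurableSet_Ico
    have hdisj : Disjoint (Set.Ioc (-1 : ℝ) (x - ε)) (Set.Ico (x + ε) 1) := by
      apply Set.disjoint_left.2
      rintro t ⟨_, h2⟩ ⟨h3, _⟩
      linarith
    rw [hset, MeasureTheory.setIntegral_union hdisj measurableSet_Ico hintL hintR]
    have hL : (∫ t in Set.Ioc (-1 : ℝ) (x - ε), t / ((x - t) * Real.sqrt (1 - t ^ 2)))
        = pmG x (x - ε) - pmG x (-1) := by
      rw [MeasureTheory.integral_Ioc_eq_integral_Ioo]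
      exact pm_ftc hx1 hx2 le_rfl (by linarith) (by linarith) (Or.inl (by linarith))
        ((integrableOn_Ioc_iff_integrableOn_Ioo).1 hintL)
    have hR : (∫ t in Set.Ico (x + ε) 1, t / ((x - t) * Real.sqrt (1 - t ^ 2)))
        = pmG x 1 - pmG x (x + ε) := by
      rw [MeasureTheory.integral_Ico_eq_integral_Ioo]
      exact pm_ftc hx1 hx2 (by linarith) (by linarith) le_rfl (Or.inr (by linarith))
        (hintR.mono_set Set.Ioo_subset_Ico_self)
    have hG1 : pmG x (-1) = π / 2 := by
      have h0 : Real.sqrt (1 - (-1 : ℝ) ^ 2) = 0 := by norm_num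
      have harg : (1 : ℝ) - x * (-1) + Real.sqrt (1 - x ^ 2) * Real.sqrt (1 - (-1 : ℝ) ^ 2)
          = x - (-1) := by rw [h0]; ring
      unfold pmG
      rw [harg, sub_self, mul_zero, add_zero, Real.arcsin_neg_one]
      ring
    have hG2 : pmG x 1 = -(π / 2) := by
      have h0 : Real.sqrt (1 - (1 : ℝ) ^ 2) = 0 := by norm_num
      have harg : (1 : ℝ) - x * 1 + Real.sqrt (1 - x ^ 2) * Real.sqrt (1 - (1 : ℝ) ^ 2)
          = -(x - 1) := by rw [h0]; ring
      unfold pmG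
      rw [harg, Real.log_neg_eq_log, sub_self, mul_zero, add_zero, Real.arcsin_one]
    have hG3 : pmG x (x - ε) = -Real.arcsin (x - ε) + (x / Real.sqrt (1 - x ^ 2)) *
        (Real.log (1 - x * (x - ε) + Real.sqrt (1 - x ^ 2) * Real.sqrt (1 - (x - ε) ^ 2))
          - Real.log ε) := by
      unfold pmG
      rw [show x - (x - ε) = ε by ring]
    have hG4 : pmG x (x + ε) = -Real.arcsin (x + ε) + (x / Real.sqrt (1 - x ^ 2)) *
        (Real.log (1 - x * (x + ε) + Real.sqrt (1 - x ^ 2) * Real.sqrt (1 - (x + ε) ^ 2))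
          - Real.log ε) := by
      unfold pmG
      rw [show x - (x + ε) = -ε by ring, Real.log_neg_eq_log]
    rw [hL, hR, hG1, hG2, hG3, hG4, hψdef]
    ring
  have hev : (fun ε : ℝ => ∫ t in Set.Ioo (-1 : ℝ) 1 \ Metric.ball x ε,
      t / ((x - t) * Real.sqrt (1 - t ^ 2))) =ᶠ[nhdsWithin 0 (Set.Ioi 0)] ψ := by
    filter_upwards [Ioo_mem_nhdsGT_of_mem (⟨le_refl (0 : ℝ), hε0pos⟩ : (0 : ℝ) ∈ Set.Ico 0 ε0)]
      with ε hε
    exact hEq ε hε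
  have h1 : Filter.Tendsto
      (fun ε : ℝ => ∫ t in Set.Ioo (-1 : ℝ) 1 \ Metric.ball x ε,
        t / ((x - t) * Real.sqrt (1 - t ^ 2)))
      (nhdsWithin 0 (Set.Ioi 0)) (nhds (-π)) := hmain.congr' hev.symm
  refine ⟨h1, ?_⟩
  have h2 := h1.const_mul (1 / (2 * π))
  have hval : (1 / (2 * π)) * (-π) = -(1 / 2 : ℝ) := by
    have hπ : (π : ℝ) ≠ 0 := Real.pi_ne_zero
    field_simp
  rwa [hval] at h2
end
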